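/- arXiv:2512.04406 — 3 statements merged into one kernel-verified Lean document; each statement's English description precedes it below -/
import Mathlib

section
/- A matrix S ∈ M is a minimizer of Φ over M if and only if the matrix X := G(S) − Diag(G(S)·S) is positive semidefinite and X·S = 0. -/
open Matrix BigOperators

/-- Frobenius inner product `⟨A, B⟩ = Tr(AᵀB)`. -/
noncomputable def fip {k l : Type*} [Fintype k] [Fintype l] (A B : Matrix k l ℝ) : ℝ :=
  (Aᵀ * B).trace

/-- The linear operator `𝒜 : S_n → ℝ^m`, `𝒜(X) = (⟨A_i, X⟩)_i`. -/
noncomputable def opA {n m : ℕ} (A : Fin m → Matrix (Fin n) (Fin n) ℝ)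
    (X : Matrix (Fin n) (Fin n) ℝ) : Fin m → ℝ :=
  fun i => fip (A i) X

/-- The adjoint operator `𝒜* : ℝ^m → S_n`, `𝒜*(y) = Σ_i y_i A_i`. -/
noncomputable def adjA {n m : ℕ} (A : Fin m → Matrix (Fin n) (Fin n) ℝ)
    (y : Fin m → ℝ) : Matrix (Fin n) (Fin n) ℝ :=
  ∑ i, y i • A i

/-- The inverse `(𝒜𝒜*)⁻¹` of the operator `𝒜𝒜* : ℝ^m → ℝ^m`. -/
noncomputable def AAinv {n m : ℕ} (A : Fin m → Matrix (Fin n) (Fin n) ℝ) :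
    (Fin m → ℝ) → (Fin m → ℝ) :=
  Function.invFun (fun y => opA A (adjA A y))

lemma fip_eq_sum {k l : Type*} [Fintype k] [Fintype l] (A B : Matrix k l ℝ) :
    fip A B = ∑ i, ∑ j, A i j * B i j := by
  rw [fip, Matrix.trace]
  simp only [Matrix.diag_apply, Matrix.mul_apply, Matrix.transpose_apply]
  rw [Finset.sum_comm]

lemma fip_self_nonneg {k l : Type*} [Fintype k] [Fintype l] (A : Matrix k l ℝ) :
    0 ≤ fip A A := by
  rw [fip_eq_sum]
  exact Finset.sum_nonneg fun i _ => Finset.sum_nonneg fun j _ => mul_self_nonneg _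

lemma eq_zero_of_fip_self {k l : Type*} [Fintype k] [Fintype l] (A : Matrix k l ℝ)
    (h : fip A A = 0) : A = 0 := by
  rw [fip_eq_sum] at h
  ext i j
  have h1 : ∀ i ∈ Finset.univ, (0:ℝ) ≤ ∑ j, A i j * A i j :=
    fun i _ => Finset.sum_nonneg fun j _ => mul_self_nonneg _
  have h2 := (Finset.sum_eq_zero_iff_of_nonneg h1).mp h i (Finset.mem_univ i)
  have h3 := (Finset.sum_eq_zero_iff_of_nonneg
    (fun j _ => mul_self_nonneg (A i j))).mp h2 j (Finset.mem_univ j)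
  simpa [mul_self_eq_zero] using h3

lemma fip_symm_sq {n : ℕ} (P Q : Matrix (Fin n) (Fin n) ℝ) (hP : Pᵀ = P) (hQ : Qᵀ = Q) :
    fip (P * P) (Q * Q) = fip (P * Q) (P * Q) := by
  rw [fip, fip, Matrix.transpose_mul, Matrix.transpose_mul, hP, hQ]
  calc (P * P * (Q * Q)).trace
      = (P * (P * (Q * Q))).trace := by rw [Matrix.mul_assoc]
    _ = ((P * (Q * Q)) * P).trace := Matrix.trace_mul_comm _ _
    _ = ((P * Q) * (Q * P)).trace := by rw [show (P * (Q * Q)) * P = (P * Q) * (Q * P) by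
          simp only [Matrix.mul_assoc]]
    _ = ((Q * P) * (P * Q)).trace := Matrix.trace_mul_comm _ _
    _ = (Q * P * (P * Q)).trace := rfl

open scoped MatrixOrder in
lemma fip_psd_rewrite {n : ℕ} {X Y : Matrix (Fin n) (Fin n) ℝ}
    (hX : X.PosSemidef) (hY : Y.PosSemidef) :
    fip X Y = fip (CFC.sqrt X * CFC.sqrt Y) (CFC.sqrt X * CFC.sqrt Y) := by
  have h1 : fip X Y = fip (CFC.sqrt X * CFC.sqrt X) (CFC.sqrt Y * CFC.sqrt Y) := by
    rw [CFC.sqrt_mul_sqrt_self X hX.nonneg, CFC.sqrt_mul_sqrt_self Y hY.nonneg]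
  rw [h1]
  exact fip_symm_sq _ _ (by simpa using (Matrix.nonneg_iff_posSemidef.mp (CFC.sqrt_nonneg X)).1.eq) (by simpa using (Matrix.nonneg_iff_posSemidef.mp (CFC.sqrt_nonneg Y)).1.eq)

lemma fip_psd_nonneg {n : ℕ} {X Y : Matrix (Fin n) (Fin n) ℝ}
    (hX : X.PosSemidef) (hY : Y.PosSemidef) : 0 ≤ fip X Y := by
  rw [fip_psd_rewrite hX hY]; exact fip_self_nonneg _

open scoped MatrixOrder in
lemma psd_mul_eq_zero {n : ℕ} {X Y : Matrix (Fin n) (Fin n) ℝ}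
    (hX : X.PosSemidef) (hY : Y.PosSemidef) (h : fip X Y = 0) : X * Y = 0 := by
  rw [fip_psd_rewrite hX hY] at h
  have h0 : CFC.sqrt X * CFC.sqrt Y = 0 := eq_zero_of_fip_self _ h
  calc X * Y = (CFC.sqrt X * CFC.sqrt X) * (CFC.sqrt Y * CFC.sqrt Y) := by
        rw [CFC.sqrt_mul_sqrt_self X hX.nonneg, CFC.sqrt_mul_sqrt_self Y hY.nonneg]
    _ = CFC.sqrt X * (CFC.sqrt X * CFC.sqrt Y) * CFC.sqrt Y := by simp only [Matrix.mul_assoc]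
    _ = 0 := by rw [h0]; simp

lemma key_identity {n : ℕ} (D Xt U C S T : Matrix (Fin n) (Fin n) ℝ) (σ : ℝ) :
    (fip D (T + C) - fip Xt (U - T - C) + σ / 2 * fip (U - T - C) (U - T - C))
      - (fip D (S + C) - fip Xt (U - S - C) + σ / 2 * fip (U - S - C) (U - S - C))
    = fip (Xt - σ • (U - S - C) + D) (T - S) + σ / 2 * fip (T - S) (T - S) := by
  simp only [fip_eq_sum, Matrix.add_apply, Matrix.sub_apply, Matrix.smul_apply, smul_eq_mul,
    Finset.mul_sum, ← Finset.sum_sub_distrib, ← Finset.sum_add_distrib]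
  exact Finset.sum_congr rfl fun i _ => Finset.sum_congr rfl fun j _ => by ring

lemma fip_sub_left {k l : Type*} [Fintype k] [Fintype l] (A B C : Matrix k l ℝ) :
    fip (A - B) C = fip A C - fip B C := by
  simp only [fip_eq_sum, Matrix.sub_apply, sub_mul, Finset.sum_sub_distrib]

lemma fip_add_left {k l : Type*} [Fintype k] [Fintype l] (A B C : Matrix k l ℝ) :
    fip (A + B) C = fip A C + fip B C := by
  simp only [fip_eq_sum, Matrix.add_apply, add_mul, Finset.sum_add_distrib]

lemma fip_sub_right {k l : Type*} [Fintype k] [Fintype l] (A B C : Matrix k l ℝ) :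
    fip A (B - C) = fip A B - fip A C := by
  simp only [fip_eq_sum, Matrix.sub_apply, mul_sub, Finset.sum_sub_distrib]

lemma fip_smul_right {k l : Type*} [Fintype k] [Fintype l] (r : ℝ) (A B : Matrix k l ℝ) :
    fip A (r • B) = r * fip A B := by
  simp only [fip_eq_sum, Matrix.smul_apply, smul_eq_mul, Finset.mul_sum]
  exact Finset.sum_congr rfl fun i _ => Finset.sum_congr rfl fun j _ => by ring

lemma fip_smul_left {k l : Type*} [Fintype k] [Fintype l] (r : ℝ) (A B : Matrix k l ℝ) :
    fip (r • A) B = r * fip A B := by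
  simp only [fip_eq_sum, Matrix.smul_apply, smul_eq_mul, Finset.mul_sum]
  exact Finset.sum_congr rfl fun i _ => Finset.sum_congr rfl fun j _ => by ring

lemma fip_diagonal_left {n : ℕ} (d : Fin n → ℝ) (B : Matrix (Fin n) (Fin n) ℝ) :
    fip (Matrix.diagonal d) B = ∑ i, d i * B i i := by
  rw [fip_eq_sum]
  refine Finset.sum_congr rfl fun i _ => ?_
  rw [Finset.sum_eq_single i]
  · simp
  · intro j _ hj
    simp [Matrix.diagonal_apply_ne d (Ne.symm hj)]
  · simp

lemma nonneg_of_small (a b δ : ℝ) (hδ : 0 < δ)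
    (h : ∀ t : ℝ, 0 < t → t ≤ δ → 0 ≤ a + t * b) : 0 ≤ a := by
  by_contra hneg
  push_neg at hneg
  rcases le_or_gt b 0 with hb | hb
  · have h1 := h δ hδ le_rfl
    nlinarith
  · have hb' : (0:ℝ) < 2 * b := by linarith
    have ht : 0 < min δ (-a / (2 * b)) := lt_min hδ (div_pos (by linarith) hb')
    have h1 := h _ ht (min_le_left _ _)
    have h2 : min δ (-a / (2 * b)) ≤ -a / (2 * b) := min_le_right _ _
    have key : (-a / (2 * b)) * b = -a / 2 := by field_simp
    have h3 : min δ (-a / (2 * b)) * b ≤ (-a / (2 * b)) * b :=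
      mul_le_mul_of_nonneg_right h2 hb.le
    rw [key] at h3
    linarith

lemma psd_convex {n : ℕ} {S S' : Matrix (Fin n) (Fin n) ℝ}
    (hS : S.PosSemidef) (hS' : S'.PosSemidef) {t : ℝ} (h0 : 0 ≤ t) (h1 : t ≤ 1) :
    (S + t • (S' - S)).PosSemidef := by
  have e : S + t • (S' - S) = (1 - t) • S + t • S' := by
    ext i j
    simp only [Matrix.add_apply, Matrix.smul_apply, Matrix.sub_apply, smul_eq_mul]
    ring
  rw [e]
  refine Matrix.PosSemidef.of_dotProduct_mulVec_nonneg ?_ ?_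
  · have hsm : ∀ (c : ℝ) {M : Matrix (Fin n) (Fin n) ℝ}, M.IsHermitian → (c • M).IsHermitian :=
      fun c M h => by
        show (c • M)ᴴ = c • M
        rw [Matrix.conjTranspose_smul, star_trivial, h]
    exact ((hsm (1 - t) hS.1).add (hsm t hS'.1))
  · intro x
    have e2 : star x ⬝ᵥ ((1 - t) • S + t • S') *ᵥ x
        = (1 - t) * (star x ⬝ᵥ S *ᵥ x) + t * (star x ⬝ᵥ S' *ᵥ x) := by
      simp [Matrix.add_mulVec, Matrix.smul_mulVec, dotProduct_add, dotProduct_smul,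
        smul_eq_mul]
    rw [e2]
    have := hS.dotProduct_mulVec_nonneg x
    have := hS'.dotProduct_mulVec_nonneg x
    nlinarith

set_option maxHeartbeats 2000000

/-- `S ∈ M` is a minimizer of `Φ` over
`M = {S PSD with unit diagonal}` if and only if
`X := G(S) − Diag(G(S)·S) ⪰ 0` and `X·S = 0`, where
`Φ(S) = ⟨D, S+C⟩ − ⟨X̃, 𝒜*(y⁰) − S − C⟩ + (σ/2)‖𝒜*(y⁰) − S − C‖²` and
`G(S) = X̃ − σ(𝒜*(y⁰) − S − C) + D` is its Euclidean gradient. -/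
theorem stmt3 {n m : ℕ} (hn : 0 < n) (hm : 0 < m)
    (A : Fin m → Matrix (Fin n) (Fin n) ℝ) (hA : ∀ i, (A i).IsSymm)
    (hinv : Function.Bijective (fun y : Fin m → ℝ => opA A (adjA A y)))
    (b : Fin m → ℝ) (C : Matrix (Fin n) (Fin n) ℝ) (hC : C.IsSymm)
    (D : Matrix (Fin n) (Fin n) ℝ) (hD : D = adjA A (AAinv A b))
    (Xt : Matrix (Fin n) (Fin n) ℝ) (hXt : Xt.IsSymm)
    (y0 : Fin m → ℝ) (σ : ℝ) (hσ : 0 < σ)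
    (Phi : Matrix (Fin n) (Fin n) ℝ → ℝ)
    (hPhi : ∀ S, Phi S = fip D (S + C) - fip Xt (adjA A y0 - S - C)
        + σ / 2 * fip (adjA A y0 - S - C) (adjA A y0 - S - C))
    (G : Matrix (Fin n) (Fin n) ℝ → Matrix (Fin n) (Fin n) ℝ)
    (hG : ∀ S, G S = Xt - σ • (adjA A y0 - S - C) + D)
    (S : Matrix (Fin n) (Fin n) ℝ)
    (hSpsd : S.PosSemidef) (hSdiag : ∀ i, S i i = 1)
    (X : Matrix (Fin n) (Fin n) ℝ)
    (hX : X = G S - Matrix.diagonal (Matrix.diag (G S * S))) :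
    (∀ S' : Matrix (Fin n) (Fin n) ℝ, S'.PosSemidef → (∀ i, S' i i = 1) → Phi S ≤ Phi S')
      ↔ (X.PosSemidef ∧ X * S = 0) := by
  have hSsymm : Sᵀ = S := by simpa using hSpsd.1.eq
  have hS' : ∀ a b : Fin n, S a b = S b a := fun a b => by
    conv_rhs => rw [← hSsymm]
    rfl
  -- the key quadratic expansion
  have hkey : ∀ T, Phi T - Phi S
      = fip (G S) (T - S) + σ / 2 * fip (T - S) (T - S) := fun T => by
    rw [hPhi T, hPhi S, hG S]
    exact key_identity D Xt (adjA A y0) C S T σ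
  set d : Fin n → ℝ := Matrix.diag (G S * S) with hddef
  have hXd : X = G S - Matrix.diagonal d := hX
  have hGX : G S = X + Matrix.diagonal d := by rw [hXd]; abel
  -- symmetry of X
  have hadj : ∀ y : Fin m → ℝ, (adjA A y)ᵀ = adjA A y := fun y => by
    show (∑ i, y i • A i)ᵀ = ∑ i, y i • A i
    rw [Matrix.transpose_sum]
    exact Finset.sum_congr rfl fun i _ => by rw [Matrix.transpose_smul, hA i]
  have hDsym : Dᵀ = D := by rw [hD]; exact hadj _
  have hWsym : (G S)ᵀ = G S := by
    rw [hG S]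
    simp only [Matrix.transpose_add, Matrix.transpose_sub, Matrix.transpose_smul,
      hadj y0, hC.eq, hXt.eq, hSsymm, hDsym]
  have hXsymm : Xᵀ = X := by
    rw [hXd]
    simp only [Matrix.transpose_sub, Matrix.diagonal_transpose, hWsym]
  -- diag (X * S) = 0
  have hXSdiag : ∀ i, (X * S) i i = 0 := by
    intro i
    rw [hXd, Matrix.sub_mul, Matrix.sub_apply]
    have h1 : (Matrix.diagonal d * S) i i = d i := by
      rw [Matrix.diagonal_mul, hSdiag i, mul_one]
    rw [h1, hddef]
    simp [Matrix.diag_apply]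
  have hrowX : ∀ i, ∑ j, X i j * S i j = 0 := fun i => by
    have h1 : (X * S) i i = ∑ j, X i j * S j i := Matrix.mul_apply
    rw [hXSdiag i] at h1
    rw [show (∑ j, X i j * S i j) = ∑ j, X i j * S j i from
      Finset.sum_congr rfl fun j _ => by rw [hS' i j]]
    exact h1.symm
  have hX' : ∀ a b : Fin n, X a b = X b a := fun a b => by
    conv_rhs => rw [← hXsymm]
    rfl
  have hcolX : ∀ j, ∑ i, X i j * S i j = 0 := fun j => by
    rw [show (∑ i, X i j * S i j) = ∑ i, X j i * S j i from
      Finset.sum_congr rfl fun i _ => by rw [hX' i j, hS' i j]]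
    exact hrowX j
  have hfipGS : fip (G S) S = ∑ i, d i := by
    rw [fip_eq_sum]
    refine Finset.sum_congr rfl fun i _ => ?_
    have h1 : d i = ∑ j, G S i j * S j i := by
      rw [hddef]; exact Matrix.mul_apply
    rw [h1]
    exact Finset.sum_congr rfl fun j _ => by rw [hS' i j]
  have hfipXS : fip X S = 0 := by
    rw [hXd, fip_sub_left, hfipGS, fip_diagonal_left]
    have : (∑ i, d i * S i i) = ∑ i, d i := Finset.sum_congr rfl fun i _ => by
      rw [hSdiag i, mul_one]
    rw [this, sub_self]
  have hGexp : ∀ S' : Matrix (Fin n) (Fin n) ℝ, (∀ i, S' i i = 1) →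
      fip (G S) (S' - S) = fip X S' - fip X S := by
    intro S' h2
    rw [hGX, fip_add_left, fip_sub_right, fip_diagonal_left]
    have : (∑ i, d i * (S' - S) i i) = 0 := Finset.sum_eq_zero fun i _ => by
      simp [Matrix.sub_apply, hSdiag i, h2 i]
    rw [this, add_zero]
  constructor
  · -- minimizer implies KKT
    intro hmin
    have hVI : ∀ S' : Matrix (Fin n) (Fin n) ℝ, S'.PosSemidef → (∀ i, S' i i = 1) →
        0 ≤ fip (G S) (S' - S) := by
      intro S' h1 h2
      refine nonneg_of_small _ (σ / 2 * fip (S' - S) (S' - S)) 1 one_pos ?_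
      intro t ht0 ht1
      have hmem := psd_convex hSpsd h1 ht0.le ht1
      have hdg : ∀ i, (S + t • (S' - S)) i i = 1 := fun i => by
        simp [Matrix.add_apply, Matrix.smul_apply, Matrix.sub_apply, hSdiag i, h2 i]
      have h3 := hmin _ hmem hdg
      have h4 := hkey (S + t • (S' - S))
      have h5 : S + t • (S' - S) - S = t • (S' - S) := by abel
      rw [h5, fip_smul_right, fip_smul_left, fip_smul_right] at h4
      nlinarith [h4, h3, ht0]
    have h3' : ∀ S' : Matrix (Fin n) (Fin n) ℝ, S'.PosSemidef → (∀ i, S' i i = 1) →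
        0 ≤ fip X S' := by
      intro S' h1 h2
      have hv := hVI S' h1 h2
      rw [hGexp S' h2, hfipXS, sub_zero] at hv
      exact hv
    have hquad : ∀ u : Fin n → ℝ, 0 ≤ star u ⬝ᵥ X *ᵥ u := by
      intro u
      have hstar : star u = u := by
        funext i; simp
      rw [hstar]
      have hdot : u ⬝ᵥ X *ᵥ u = ∑ i, ∑ j, X i j * (u i * u j) := by
        simp only [dotProduct, Matrix.mulVec, Finset.mul_sum]
        exact Finset.sum_congr rfl fun i _ => Finset.sum_congr rfl fun j _ => by ring
      rw [hdot]
      set Qf := ∑ i, ∑ j, X i j * (u i * u j) with hQf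
      set B := ∑ i, |u i| with hBdef
      have hB : 0 ≤ B := Finset.sum_nonneg fun i _ => abs_nonneg _
      have hBpos : (0:ℝ) < 1 + B := by linarith
      set δ : ℝ := 1 / (1 + B) with hδdef
      have hδ : 0 < δ := by positivity
      set K := ∑ i, ∑ j, |X i j * S i j| * (u i ^ 2 * u j ^ 2) with hKdef
      refine nonneg_of_small _ K (δ ^ 2) (by positivity) ?_
      intro r hr0 hrδ
      set t := Real.sqrt r with htdef
      have ht0 : 0 < t := Real.sqrt_pos.mpr hr0
      have ht2 : t ^ 2 = r := Real.sq_sqrt hr0.le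
      have htδ : t ≤ δ := by
        rw [htdef]
        calc Real.sqrt r ≤ Real.sqrt (δ ^ 2) := Real.sqrt_le_sqrt hrδ
          _ = δ := Real.sqrt_sq hδ.le
      set s : Fin n → ℝ := fun i => t * u i with hsdef
      have hsq : ∀ i, s i ^ 2 = r * u i ^ 2 := fun i => by
        simp only [hsdef]; rw [mul_pow, ht2]
      have hs1 : ∀ i, s i ^ 2 ≤ 1 := by
        intro i
        have hui : |u i| ≤ B := Finset.single_le_sum (f := fun i => |u i|)
          (fun i _ => abs_nonneg (u i)) (Finset.mem_univ i)
        have hδB : δ * (1 + B) = 1 := by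
          rw [hδdef]; field_simp
        have habs : |s i| ≤ 1 := by
          have e1 : |s i| = t * |u i| := by
            simp only [hsdef]; rw [abs_mul, abs_of_pos ht0]
          have e2 : t * |u i| ≤ δ * B := mul_le_mul htδ hui (abs_nonneg _) hδ.le
          rw [e1]
          nlinarith [hδB, hδ]
        calc s i ^ 2 = |s i| ^ 2 := (sq_abs _).symm
          _ ≤ 1 := by nlinarith [abs_nonneg (s i), habs]
      set c : Fin n → ℝ := fun i => Real.sqrt (1 - s i ^ 2) with hcdef
      have hc2 : ∀ i, c i ^ 2 = 1 - s i ^ 2 := fun i => Real.sq_sqrt (by linarith [hs1 i])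
      have hc0 : ∀ i, 0 ≤ c i := fun i => Real.sqrt_nonneg _
      have hc1 : ∀ i, c i ≤ 1 := fun i => by nlinarith [hc2 i, hc0 i, sq_nonneg (s i)]
      have h1mc : ∀ i, 0 ≤ 1 - c i := fun i => by linarith [hc1 i]
      have h1mcle : ∀ i, 1 - c i ≤ s i ^ 2 := fun i => by nlinarith [hc2 i, hc0 i, hc1 i]
      set S2 : Matrix (Fin n) (Fin n) ℝ :=
        Matrix.of (fun i j => c i * S i j * c j + s i * s j) with hS2def
      have hS2 : ∀ i j, S2 i j = c i * S i j * c j + s i * s j := fun i j => by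
        rw [hS2def]; rfl
      have hS2herm : S2.IsHermitian := by
        show S2ᴴ = S2
        ext i j
        rw [Matrix.conjTranspose_apply, hS2, hS2]
        rw [hS' j i]
        simp only [star_trivial]
        ring
      have hS2psd : S2.PosSemidef := by
        refine Matrix.PosSemidef.of_dotProduct_mulVec_nonneg hS2herm ?_
        intro x
        have hx : star x = x := by funext i; simp
        rw [hx]
        have e : x ⬝ᵥ S2 *ᵥ x
            = (fun i => c i * x i) ⬝ᵥ S *ᵥ (fun i => c i * x i) + (∑ i, s i * x i) ^ 2 := by
          have l1 : x ⬝ᵥ S2 *ᵥ x = ∑ i, ∑ j, x i * (S2 i j * x j) := by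
            simp [dotProduct, Matrix.mulVec, Finset.mul_sum]
          have l2 : (fun i => c i * x i) ⬝ᵥ S *ᵥ (fun i => c i * x i)
              = ∑ i, ∑ j, (c i * x i) * (S i j * (c j * x j)) := by
            simp [dotProduct, Matrix.mulVec, Finset.mul_sum]
          have l3 : (∑ i, s i * x i) ^ 2 = ∑ i, ∑ j, (s i * x i) * (s j * x j) := by
            rw [pow_two, Finset.sum_mul_sum]
          rw [l1, l2, l3, ← Finset.sum_add_distrib]
          refine Finset.sum_congr rfl fun i _ => ?_
          rw [← Finset.sum_add_distrib]
          refine Finset.sum_congr rfl fun j _ => ?_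
          rw [hS2]
          ring
        rw [e]
        have h0 := hSpsd.dotProduct_mulVec_nonneg (fun i => c i * x i)
        have hx2 : star (fun i => c i * x i) = fun i => c i * x i := by funext i; simp
        rw [hx2] at h0
        have := sq_nonneg (∑ i, s i * x i)
        linarith
      have hS2diag : ∀ i, S2 i i = 1 := fun i => by
        rw [hS2, hSdiag i]
        linear_combination hc2 i
      have h0 := h3' S2 hS2psd hS2diag
      have hsplit : fip X S2 = (∑ i, ∑ j, (X i j * S i j) * (c i * c j)) + r * Qf := by
        rw [fip_eq_sum, hQf, Finset.mul_sum, ← Finset.sum_add_distrib]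
        refine Finset.sum_congr rfl fun i _ => ?_
        rw [Finset.mul_sum, ← Finset.sum_add_distrib]
        refine Finset.sum_congr rfl fun j _ => ?_
        rw [hS2]
        simp only [hsdef]
        linear_combination (X i j * (u i * u j)) * ht2
      set g : Fin n → ℝ := fun i => ∑ j, (X i j * S i j) * c j with hgdef
      have hg0 : ∑ i, g i = 0 := by
        simp only [hgdef]
        rw [Finset.sum_comm]
        refine Finset.sum_eq_zero fun j _ => ?_
        rw [← Finset.sum_mul, hcolX j, zero_mul]
      have hid : (∑ i, ∑ j, (X i j * S i j) * (c i * c j))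
          = ∑ i, ∑ j, (X i j * S i j) * ((c i - 1) * (c j - 1)) := by
        have e1 : ∀ i, (∑ j, (X i j * S i j) * (c i * c j)) = c i * g i := fun i => by
          simp only [hgdef]; rw [Finset.mul_sum]
          exact Finset.sum_congr rfl fun j _ => by ring
        have e2 : ∀ i, (∑ j, (X i j * S i j) * ((c i - 1) * (c j - 1)))
            = (c i - 1) * g i := fun i => by
          have e3 : (∑ j, (X i j * S i j) * ((c i - 1) * (c j - 1)))
              = (c i - 1) * (g i - ∑ j, X i j * S i j) := by
            simp only [hgdef]
            rw [mul_sub, Finset.mul_sum, Finset.mul_sum, ← Finset.sum_sub_distrib]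
            exact Finset.sum_congr rfl fun j _ => by ring
          rw [e3, hrowX i, sub_zero]
        calc (∑ i, ∑ j, (X i j * S i j) * (c i * c j))
            = ∑ i, c i * g i := Finset.sum_congr rfl fun i _ => e1 i
          _ = ∑ i, ((c i - 1) * g i + g i) := Finset.sum_congr rfl fun i _ => by ring
          _ = (∑ i, (c i - 1) * g i) + ∑ i, g i := Finset.sum_add_distrib
          _ = ∑ i, (c i - 1) * g i := by rw [hg0, add_zero]
          _ = _ := Finset.sum_congr rfl fun i _ => (e2 i).symm
      have hbd : (∑ i, ∑ j, (X i j * S i j) * ((c i - 1) * (c j - 1))) ≤ r ^ 2 * K := by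
        have hterm : ∀ i j, (X i j * S i j) * ((c i - 1) * (c j - 1))
            ≤ r ^ 2 * (|X i j * S i j| * (u i ^ 2 * u j ^ 2)) := by
          intro i j
          have h1 : (c i - 1) * (c j - 1) = (1 - c i) * (1 - c j) := by ring
          have h2 : (1 - c i) * (1 - c j) ≤ s i ^ 2 * s j ^ 2 :=
            mul_le_mul (h1mcle i) (h1mcle j) (h1mc j) (sq_nonneg _)
          have h3 : (X i j * S i j) * ((1 - c i) * (1 - c j))
              ≤ |X i j * S i j| * ((1 - c i) * (1 - c j)) :=
            mul_le_mul_of_nonneg_right (le_abs_self _) (mul_nonneg (h1mc i) (h1mc j))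
          have h4 : |X i j * S i j| * ((1 - c i) * (1 - c j))
              ≤ |X i j * S i j| * (s i ^ 2 * s j ^ 2) :=
            mul_le_mul_of_nonneg_left h2 (abs_nonneg _)
          have h5 : s i ^ 2 * s j ^ 2 = r ^ 2 * (u i ^ 2 * u j ^ 2) := by
            rw [hsq i, hsq j]; ring
          calc (X i j * S i j) * ((c i - 1) * (c j - 1))
              = (X i j * S i j) * ((1 - c i) * (1 - c j)) := by rw [h1]
            _ ≤ |X i j * S i j| * ((1 - c i) * (1 - c j)) := h3
            _ ≤ |X i j * S i j| * (s i ^ 2 * s j ^ 2) := h4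
            _ = r ^ 2 * (|X i j * S i j| * (u i ^ 2 * u j ^ 2)) := by rw [h5]; ring
        calc (∑ i, ∑ j, (X i j * S i j) * ((c i - 1) * (c j - 1)))
            ≤ ∑ i, ∑ j, r ^ 2 * (|X i j * S i j| * (u i ^ 2 * u j ^ 2)) :=
              Finset.sum_le_sum fun i _ => Finset.sum_le_sum fun j _ => hterm i j
          _ = r ^ 2 * K := by
              rw [hKdef, Finset.mul_sum]
              exact Finset.sum_congr rfl fun i _ => by rw [Finset.mul_sum]
      rw [hsplit, hid] at h0
      have final : 0 ≤ r * Qf + r ^ 2 * K := by linarith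
      nlinarith [final, hr0]
    have hXherm : X.IsHermitian := by
      show Xᴴ = X
      have e : Xᴴ = Xᵀ := by
        ext i j
        rw [Matrix.conjTranspose_apply, Matrix.transpose_apply]
        simp
      rw [e, hXsymm]
    have hXpsd : X.PosSemidef := Matrix.PosSemidef.of_dotProduct_mulVec_nonneg hXherm hquad
    exact ⟨hXpsd, psd_mul_eq_zero hXpsd hSpsd hfipXS⟩
  · -- KKT implies minimizer
    rintro ⟨hXpsd, hXS⟩ S' h1 h2
    have hk := hkey S'
    have hfS' : 0 ≤ fip X S' := fip_psd_nonneg hXpsd h1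
    rw [hGexp S' h2, hfipXS, sub_zero] at hk
    have hq := fip_self_nonneg (S' - S)
    nlinarith [hσ, hq, hfS', hk]
end

section
/- Let Y ∈ ℝ^{n×p} have every row of unit Euclidean norm, let G ∈ S_n and σ > 0, set S = Y·Yᵀ and X = G − Diag(G·S). Let U ∈ ℝ^{n×p} satisfy Y·Uᵀ = 0 (the n×n zero matrix), set Z = Y·Uᵀ + U·Yᵀ and H̃ = 2·G·U + 2σ(Z − 𝒜*((𝒜𝒜*)^{-1}𝒜(Z)))·Y. Then H̃ − Diag(H̃·Yᵀ)·Y − 2·Diag(G·S)·U = 2·X·U. (This identifies the Riemannian Hessian of Y ↦ Φ(YYᵀ) applied to such U with 2XU.) -/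
open Matrix BigOperators

/-- with `S = Y·Yᵀ`, `X = G − Diag(G·S)`, `Y·Uᵀ = 0`,
`Z = Y·Uᵀ + U·Yᵀ` and `H̃ = 2·G·U + 2σ(Z − 𝒜*((𝒜𝒜*)⁻¹𝒜(Z)))·Y`, one has
`H̃ − Diag(H̃·Yᵀ)·Y − 2·Diag(G·S)·U = 2·X·U`. -/
theorem stmt8 {n m p : ℕ} (hn : 0 < n) (hm : 0 < m)
    (A : Fin m → Matrix (Fin n) (Fin n) ℝ) (hA : ∀ i, (A i).IsSymm)
    (hinv : Function.Bijective (fun y : Fin m → ℝ => opA A (adjA A y)))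
    (Y : Matrix (Fin n) (Fin p) ℝ) (hY : ∀ i, ∑ j, (Y i j) ^ 2 = 1)
    (G : Matrix (Fin n) (Fin n) ℝ) (hG : G.IsSymm)
    (σ : ℝ) (hσ : 0 < σ)
    (S X : Matrix (Fin n) (Fin n) ℝ)
    (hS : S = Y * Yᵀ)
    (hX : X = G - Matrix.diagonal (Matrix.diag (G * S)))
    (U : Matrix (Fin n) (Fin p) ℝ) (hU : Y * Uᵀ = 0)
    (Z : Matrix (Fin n) (Fin n) ℝ) (hZ : Z = Y * Uᵀ + U * Yᵀ)
    (Ht : Matrix (Fin n) (Fin p) ℝ)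
    (hHt : Ht = (2 : ℝ) • (G * U)
        + (2 * σ) • ((Z - adjA A (AAinv A (opA A Z))) * Y)) :
    Ht - Matrix.diagonal (Matrix.diag (Ht * Yᵀ)) * Y
        - (2 : ℝ) • (Matrix.diagonal (Matrix.diag (G * S)) * U)
      = (2 : ℝ) • (X * U) := by
  have hUY : U * Yᵀ = 0 := by
    have := congrArg Matrix.transpose hU
    simpa [Matrix.transpose_mul] using this
  have hZ0 : Z = 0 := by simp [hZ, hU, hUY]
  have hop : opA A Z = 0 := by
    funext i; simp [opA, fip, hZ0]
  have hf0 : (fun y : Fin m → ℝ => opA A (adjA A y)) 0 = 0 := by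
    funext i; simp [adjA, opA, fip]
  have hinv0 : AAinv A (opA A Z) = 0 := by
    rw [hop, AAinv]; nth_rewrite 1 [← hf0]; exact Function.leftInverse_invFun hinv.injective 0
  have hadj0 : adjA A (AAinv A (opA A Z)) = 0 := by
    rw [hinv0]; simp [adjA]
  have hHt' : Ht = (2 : ℝ) • (G * U) := by
    rw [hHt, hadj0, hZ0]; simp
  have hHtY : Ht * Yᵀ = 0 := by
    rw [hHt', Matrix.smul_mul, Matrix.mul_assoc, hUY]; simp
  rw [hHtY, hHt', hX]
  have h0 : Matrix.diagonal (Matrix.diag (0 : Matrix (Fin n) (Fin n) ℝ)) * Y = 0 := by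
    ext i j
    simp [Matrix.mul_apply, Matrix.diagonal_apply]
  rw [h0]
  simp [Matrix.sub_mul, smul_sub, sub_sub]
end

section
/- Let Y ∈ ℝ^{n×p} have every row of unit Euclidean norm, let G ∈ S_n, set S = Y·Yᵀ and X = G − Diag(G·S), and suppose X is not positive semidefinite. Let δ ≥ 1 and let V ∈ ℝ^{n×δ} be a matrix whose columns are (nonzero) eigenvectors of X corresponding to strictly negative eigenvalues. Set Ỹ = [Y, 0_{n×δ}] ∈ ℝ^{n×(p+δ)} and U = [0_{n×p}, V] ∈ ℝ^{n×(p+δ)}. Then ⟨U, 2·X·Ỹ⟩ = 0 and ⟨U, 2·X·U⟩ = 2·Tr(Vᵀ·X·V) < 0; that is, U is a second-order descent direction for the factorized subproblem at Ỹ (2XỸ being the Riemannian gradient and 2XU the Riemannian Hessian applied to U). -/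
open Matrix BigOperators

lemma trace_fromBlocks_aux {m n : Type*} [Fintype m] [Fintype n]
    (A : Matrix m m ℝ) (B : Matrix m n ℝ) (C : Matrix n m ℝ) (D : Matrix n n ℝ) :
    (Matrix.fromBlocks A B C D).trace = A.trace + D.trace := by
  simp [Matrix.trace, Fintype.sum_sum_type, Matrix.diag]

/-- if `X = G − Diag(G·S)` is not PSD and `V` collects (nonzero)
eigenvectors of `X` for strictly negative eigenvalues, then with
`Ỹ = [Y, 0]` and `U = [0, V]` one has `⟨U, 2XỸ⟩ = 0` and
`⟨U, 2XU⟩ = 2·Tr(VᵀXV) < 0`; i.e. `U` is a second-order descent direction. -/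
theorem stmt11 {n p δ : ℕ} (hδ : 1 ≤ δ)
    (Y : Matrix (Fin n) (Fin p) ℝ) (hY : ∀ i, ∑ j, (Y i j) ^ 2 = 1)
    (G : Matrix (Fin n) (Fin n) ℝ) (hG : G.IsSymm)
    (S X : Matrix (Fin n) (Fin n) ℝ)
    (hS : S = Y * Yᵀ)
    (hX : X = G - Matrix.diagonal (Matrix.diag (G * S)))
    (hXnpsd : ¬ X.PosSemidef)
    (V : Matrix (Fin n) (Fin δ) ℝ)
    (hV : ∀ j : Fin δ, (fun i => V i j) ≠ 0 ∧
        ∃ lam : ℝ, lam < 0 ∧ X.mulVec (fun i => V i j) = lam • (fun i => V i j))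
    (Ytil U : Matrix (Fin n) (Fin p ⊕ Fin δ) ℝ)
    (hYtil : Ytil = Matrix.fromCols Y 0)
    (hU : U = Matrix.fromCols 0 V) :
    fip U ((2 : ℝ) • (X * Ytil)) = 0
    ∧ fip U ((2 : ℝ) • (X * U)) = 2 * (Vᵀ * X * V).trace
    ∧ 2 * (Vᵀ * X * V).trace < 0 := by
  subst hYtil hU hS hX
  set X := G - Matrix.diagonal (Matrix.diag (G * (Y * Yᵀ))) with hX
  have hneg : (Vᵀ * X * V).trace < 0 := by
    rw [Matrix.trace]
    apply Finset.sum_neg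
    · intro j _
      obtain ⟨hnz, lam, hlam, heig⟩ := hV j
      have hXV : ∀ i, (X * V) i j = lam * V i j := by
        intro i
        have := congrFun heig i
        simpa [Matrix.mulVec, Matrix.mul_apply, dotProduct] using this
      have hd : (Vᵀ * X * V) j j = lam * ∑ i, V i j ^ 2 := by
        rw [Matrix.mul_assoc, Matrix.mul_apply, Finset.mul_sum]
        apply Finset.sum_congr rfl
        intro i _
        rw [hXV i, Matrix.transpose_apply]
        ring
      have hsum : 0 < ∑ i, V i j ^ 2 := by
        have : ∃ i, V i j ≠ 0 := by
          by_contra h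
          push_neg at h
          exact hnz (funext h)
        obtain ⟨i, hi⟩ := this
        apply Finset.sum_pos' (fun k _ => sq_nonneg _)
        exact ⟨i, Finset.mem_univ i, by positivity⟩
      show (Vᵀ * X * V) j j < 0
      rw [hd]
      exact mul_neg_of_neg_of_pos hlam hsum
    · haveI : Nonempty (Fin δ) := Fin.pos_iff_nonempty.mp hδ
      exact Finset.univ_nonempty
  refine ⟨?_, ?_, ?_⟩
  · rw [fip, Matrix.mul_smul, Matrix.trace_smul, Matrix.transpose_fromCols,
      Matrix.mul_fromCols, Matrix.fromRows_mul_fromCols, trace_fromBlocks_aux]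
    simp
  · rw [fip, Matrix.mul_smul, Matrix.trace_smul, Matrix.transpose_fromCols,
      Matrix.mul_fromCols, Matrix.fromRows_mul_fromCols, trace_fromBlocks_aux]
    simp [Matrix.mul_assoc, smul_eq_mul]
  · linarith
end
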